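/- Let r, s ≥ 1 be integers and suppose H = (H₁; H₂) is a BSHM(8rs, 4s, 4s, 0) with respect to the 4s × 8rs submatrix H₁. Then there exists a Hadamard matrix L of order 4s and a permutation σ of the column indices {1,…,8rs} such that the matrix obtained from H₁ by permuting its columns according to σ equals the 4s × 8rs block matrix (L L ⋯ L) consisting of 2r copies of L placed side by side (that is, H₁ with its columns reordered equals 𝟙ᵀ ⊗ L, where 𝟙ᵀ is the all-ones row of length 2r). -/

import Mathlib

open Matrix

/-- A Hadamard matrix of order `n`: entries in `{1,-1}` and `Hᵀ * H = n • 1`. -/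
def IsHadamard {n : ℕ} (H : Matrix (Fin n) (Fin n) ℤ) : Prop :=
  (∀ i j, H i j = 1 ∨ H i j = -1) ∧ Hᵀ * H = (n : ℤ) • 1

/-- Dot product of columns `j` and `k` of the submatrix of `H` formed by the rows in `R`. -/
def colDot {n : ℕ} (H : Matrix (Fin n) (Fin n) ℤ) (R : Finset (Fin n)) (j k : Fin n) : ℤ :=
  ∑ i ∈ R, H i j * H i k

/-- `H` is a balanced splittable Hadamard matrix with respect to the submatrix formed by the
rows in `R`, with values `a, b`. -/
def IsBSHM {n : ℕ} (H : Matrix (Fin n) (Fin n) ℤ) (R : Finset (Fin n)) (a b : ℤ) : Prop :=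
  _root_.IsHadamard H ∧ ∀ j k : Fin n, j ≠ k → colDot H R j k = a ∨ colDot H R j k = b

/-!
Since the entries are `±1`, the product of two columns of `H₁` equals `4s` exactly when the
columns coincide, so the hypothesis says that two columns of `H₁` are either equal or orthogonal.
Row orthogonality of `H` gives, for the columns `c_j` of `H₁`,
`∑ₖ ⟨c_j, c_k⟩² = 8rs · ⟨c_j, c_j⟩ = 8rs · 4s`, and each nonzero term is `(4s)²`:
every column of `H₁` occurs exactly `2r` times. Hence `H₁` has `4s` distinct columns,
which are pairwise orthogonal and form the Hadamard matrix `L`.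
-/

open Finset

theorem Finset.sum_mul_eq_card_iff {ι : Type*} (s : Finset ι) {u v : ι → ℤ}
    (hu : ∀ i ∈ s, u i = 1 ∨ u i = -1) (hv : ∀ i ∈ s, v i = 1 ∨ v i = -1) :
    ∑ i ∈ s, u i * v i = #s ↔ ∀ i ∈ s, u i = v i := by
  have hle : ∀ i ∈ s, u i * v i ≤ 1 := fun i hi => by
    rcases hu i hi with h | h <;> rcases hv i hi with h' | h' <;> simp [h, h']
  rw [card_eq_sum_ones, Nat.cast_sum, Nat.cast_one, sum_eq_sum_iff_of_le hle]
  refine forall₂_congr fun i hi => ?_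
  rcases hu i hi with h | h <;> rcases hv i hi with h' | h' <;> simp [h, h']

theorem Finset.sum_sq_of_forall_eq_or_eq_zero {ι M : Type*} [CommSemiring M] [DecidableEq M]
    (s : Finset ι) {f : ι → M} {a : M} (hf : ∀ i ∈ s, f i = a ∨ f i = 0) :
    ∑ i ∈ s, f i ^ 2 = #{i ∈ s | f i = a} * a ^ 2 := by
  rw [← nsmul_eq_mul, ← sum_const, sum_filter]
  refine sum_congr rfl fun i hi => ?_
  rcases hf i hi with h | h <;> simp [h]
  exact fun h' => by simp [← h']

theorem exists_equiv_range_prod_of_card_fiber {α β : Type*} [Fintype α] [DecidableEq β]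
    (f : α → β) {m : ℕ} (hf : ∀ a, #{a' | f a' = f a} = m) :
    ∃ σ : Set.range f × Fin m ≃ α, ∀ p, f (σ p) = p.1 := by
  have hfib : ∀ b, Fintype.card {a // Set.rangeFactorization f a = b} = m := by
    rintro ⟨_, a, rfl⟩
    rw [Fintype.card_subtype, ← hf a]
    simp [Set.rangeFactorization, Subtype.ext_iff]
  let σ := (Equiv.sigmaEquivProd _ _).symm.trans <|
    (Equiv.sigmaCongrRight fun b => (Fintype.equivFinOfCardEq (hfib b)).symm).trans <|
      Equiv.sigmaFiberEquiv (Set.rangeFactorization f)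
  exact ⟨σ, fun p => congrArg Subtype.val ((Fintype.equivFinOfCardEq (hfib p.1)).symm p.2).2⟩

theorem IsHadamard.mul_transpose {n : ℕ} {H : Matrix (Fin n) (Fin n) ℤ}
    (h : _root_.IsHadamard H) : H * Hᵀ = (n : ℤ) • 1 := by
  rcases n.eq_zero_or_pos with rfl | hn
  · exact Subsingleton.elim _ _
  have hT : Hᵀ.IsHadamard := by
    refine .of_mul_conjTranspose (fun i j => ?_) ?_ ?_
    · rcases h.1 j i with h' | h' <;> simp [h', Unitary.mem_iff]
    · simpa using h.2
    · simpa using IsRegular.of_ne_zero (Nat.cast_ne_zero.mpr hn.ne' : (n : ℤ) ≠ 0)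
  simpa using hT.conjTranspose_mul

section
variable {n : ℕ} {H : Matrix (Fin n) (Fin n) ℤ} {R : Finset (Fin n)}

theorem colDot_comm (j k : Fin n) : colDot H R j k = colDot H R k j := by
  simp only [colDot, mul_comm]

theorem colDot_eq_mul_apply (j k : Fin n) :
    colDot H R j k = (Hᵀ * diagonal (fun i => if i ∈ R then (1 : ℤ) else 0) * H) j k := by
  simp [colDot, mul_apply, diagonal_apply, ite_mul]

/-- `colDot H R` is the Gram matrix `P = Hᵀ D H` with `D` the diagonal projection onto `R`;
`H Hᵀ = n • 1` and `D² = D` give `P² = n • P`, whose diagonal is the claim. -/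
theorem sum_colDot_sq (h : H * Hᵀ = (n : ℤ) • 1) (j : Fin n) :
    ∑ k, colDot H R j k ^ 2 = n * colDot H R j j := by
  set D : Matrix (Fin n) (Fin n) ℤ := diagonal fun i => if i ∈ R then 1 else 0
  have hD : D * D = D := by simp [D, diagonal_mul_diagonal]
  have hP : (Hᵀ * D * H) * (Hᵀ * D * H) = (n : ℤ) • (Hᵀ * D * H) := by
    calc (Hᵀ * D * H) * (Hᵀ * D * H) = Hᵀ * D * (H * Hᵀ) * D * H := by
          simp only [Matrix.mul_assoc]
      _ = (n : ℤ) • (Hᵀ * (D * D) * H) := by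
        rw [h, Matrix.mul_smul, Matrix.mul_one, Matrix.smul_mul, Matrix.smul_mul,
          Matrix.mul_assoc Hᵀ]
      _ = (n : ℤ) • (Hᵀ * D * H) := by rw [hD]
  calc ∑ k, colDot H R j k ^ 2 = ∑ k, colDot H R j k * colDot H R k j := by
        simp only [sq, colDot_comm j]
    _ = ((Hᵀ * D * H) * (Hᵀ * D * H)) j j := by
        rw [mul_apply]; simp only [colDot_eq_mul_apply]; rfl
    _ = n * colDot H R j j := by rw [hP, colDot_eq_mul_apply]; rfl

def subCol (H : Matrix (Fin n) (Fin n) ℤ) (R : Finset (Fin n)) (j : Fin n) : R → ℤ :=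
  fun i => H i j

theorem colDot_eq_card_iff (h : ∀ i j, H i j = 1 ∨ H i j = -1) (j k : Fin n) :
    colDot H R j k = #R ↔ subCol H R j = subCol H R k := by
  rw [colDot, sum_mul_eq_card_iff R (fun i _ => h i j) (fun i _ => h i k), funext_iff,
    Subtype.forall]
  rfl

theorem colDot_self (h : ∀ i j, H i j = 1 ∨ H i j = -1) (j : Fin n) : colDot H R j j = #R :=
  (colDot_eq_card_iff h j j).2 rfl

theorem IsBSHM.card_fiber_mul_card (hB : IsBSHM H R #R 0) (hR : R.Nonempty) (j : Fin n) :
    #{k | subCol H R k = subCol H R j} * #R = n := by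
  have hself : colDot H R j j = #R := colDot_self hB.1.1 j
  have hvals : ∀ k ∈ univ, colDot H R j k = #R ∨ colDot H R j k = 0 := fun k _ => by
    rcases eq_or_ne j k with rfl | hjk
    exacts [.inl hself, hB.2 j k hjk]
  have hsq := sum_colDot_sq (R := R) hB.1.mul_transpose j
  rw [sum_sq_of_forall_eq_or_eq_zero _ hvals, hself] at hsq
  have hfib : #{k | subCol H R k = subCol H R j} = #{k | colDot H R j k = #R} := by
    congr 1; ext k; simp [colDot_eq_card_iff hB.1.1, eq_comm]
  have hR' : ((#R : ℕ) : ℤ) ≠ 0 := by simpa using hR.card_pos.ne'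
  rw [hfib]
  have : ((#{k | colDot H R j k = #R} * #R : ℕ) : ℤ) * #R = n * #R := by
    push_cast; linear_combination hsq
  exact_mod_cast mul_right_cancel₀ hR' this

theorem IsBSHM.isHadamard_of_injective (hB : IsBSHM H R #R 0) {ℓ : ℕ} (e : R ≃ Fin ℓ)
    (c : Fin ℓ → Fin n) (hc : Function.Injective (subCol H R ∘ c)) :
    _root_.IsHadamard (of fun a t => H (e.symm a) (c t)) := by
  refine ⟨fun a t => hB.1.1 _ _, ?_⟩
  ext t t'
  have hℓ : ℓ = #R := by simpa using (Fintype.card_congr e).symm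
  have hsum : ((of fun a t => H (e.symm a) (c t))ᵀ * of fun a t => H (e.symm a) (c t)) t t' =
      colDot H R (c t) (c t') := by
    rw [mul_apply, colDot, ← sum_coe_sort R fun i => H i (c t) * H i (c t'),
      ← e.symm.sum_comp]
    rfl
  rw [hsum]
  rcases eq_or_ne t t' with rfl | htt
  · simp [colDot_self hB.1.1, hℓ]
  · have hne : subCol H R (c t) ≠ subCol H R (c t') := hc.ne htt
    rcases hB.2 _ _ fun h => hne (congrArg _ h) with h | h
    · exact absurd ((colDot_eq_card_iff hB.1.1 _ _).1 h) hne
    · simp [h, htt]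
end

theorem stmt15 {r s : ℕ} (hr : 1 ≤ r) (hs : 1 ≤ s)
    (H : Matrix (Fin (8 * r * s)) (Fin (8 * r * s)) ℤ)
    (R : Finset (Fin (8 * r * s))) (hRcard : R.card = 4 * s)
    (hbshm : IsBSHM H R (4 * (s : ℤ)) 0) :
    ∃ L : Matrix (Fin (4 * s)) (Fin (4 * s)) ℤ,
      _root_.IsHadamard L ∧
      ∃ (e : {x // x ∈ R} ≃ Fin (4 * s)) (σ : (Fin (2 * r) × Fin (4 * s)) ≃ Fin (8 * r * s)),
        ∀ (i : {x // x ∈ R}) (p : Fin (2 * r) × Fin (4 * s)),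
          H i.val (σ p) = L (e i) p.2 := by
  have hB : IsBSHM H R #R 0 := by rwa [hRcard, Nat.cast_mul, Nat.cast_ofNat]
  have hfib : ∀ j, #{k | subCol H R k = subCol H R j} = 2 * r := fun j => by
    have := hB.card_fiber_mul_card (card_pos.1 (by omega)) j
    rw [hRcard] at this
    exact Nat.eq_of_mul_eq_mul_right (by omega : 0 < 4 * s) (this.trans (by ring))
  obtain ⟨σ, hσ⟩ := exists_equiv_range_prod_of_card_fiber (subCol H R) hfib
  have hcard : Fintype.card (Set.range (subCol H R)) = 4 * s := by
    have := Fintype.card_congr σ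
    rw [Fintype.card_prod, Fintype.card_fin, Fintype.card_fin] at this
    exact Nat.eq_of_mul_eq_mul_right (by omega : 0 < 2 * r) (this.trans (by ring))
  let eQ := Fintype.equivFinOfCardEq hcard
  let e := Fintype.equivFinOfCardEq (by simp [hRcard] : Fintype.card R = 4 * s)
  let c t := Set.rangeSplitting _ (eQ.symm t)
  have hc : subCol H R ∘ c = Subtype.val ∘ eQ.symm :=
    funext fun t => Set.apply_rangeSplitting _ _
  refine ⟨of fun a t => H (e.symm a) (c t), hB.isHadamard_of_injective e c ?_, e,
    (Equiv.prodComm _ _).trans ((eQ.symm.prodCongr (Equiv.refl _)).trans σ), fun i p => ?_⟩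
  · rw [hc]
    exact Subtype.val_injective.comp eQ.symm.injective
  · show H i (σ (eQ.symm p.2, p.1)) = H (e.symm (e i)) (c p.2)
    rw [e.symm_apply_apply]
    exact congrFun ((hσ (eQ.symm p.2, p.1)).trans (Set.apply_rangeSplitting _ _).symm) i
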